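/- arXiv:2205.02901 — 5 statements merged into one kernel-verified Lean document; each statement's English description precedes it below -/
import Mathlib

section
/- Let f : ℝⁿ → ℝⁿ be continuously differentiable and let (q,p) : [t₀,t₁] → ℝⁿ × ℝⁿ be continuously differentiable curves. Define the action S(q,p) = ∫_{t₀}^{t₁} ( ⟨p(t), q̇(t)⟩ − ⟨p(t), f(q(t))⟩ ) dt. Then the Gateaux derivative d/dε|_{ε=0} S(q+ε·δq, p+ε·δp) vanishes for every pair of continuously differentiable variations (δq, δp) : [t₀,t₁] → ℝⁿ × ℝⁿ with δq(t₀) = 0 and δq(t₁) = 0 if and only if q̇(t) = f(q(t)) and ṗ(t) = −Df(q(t))ᵀ p(t) for all t ∈ [t₀,t₁]. -/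
open scoped RealInnerProductSpace

noncomputable section

abbrev Euc (n : ℕ) : Type := EuclideanSpace ℝ (Fin n)

/-- The transpose (adjoint) `Df(q)ᵀ` of the Jacobian of `f` at `q`. -/
noncomputable def jacT {n : ℕ} (f : Euc n → Euc n) (q : Euc n) : Euc n →L[ℝ] Euc n :=
  ContinuousLinearMap.adjoint (fderiv ℝ f q)

/-!
Differentiating under the integral sign, the first variation of the action in the direction
`(δq, δp)` is `∫ ⟪p, δq̇⟫ + ⟪δp, q̇⟫ - ⟪p, Df(q) δq⟫ - ⟪δp, f(q)⟫`. Integrating `⟪p, δq̇⟫` by parts,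
with no boundary term since `δq` vanishes at both ends, turns it into
`∫ ⟪δp, q̇ - f(q)⟫ - ⟪δq, ṗ + Df(q)ᵀ p⟫`. This vanishes along solutions of the adjoint system.
Conversely, varying only `δp`, resp. only `δq`, the fundamental lemma of the calculus of
variations forces each of the two continuous residuals to vanish on `[t₀, t₁]`.
-/

open MeasureTheory Set
open scoped InnerProduct

variable {E : Type*} [NormedAddCommGroup E] [InnerProductSpace ℝ E]

theorem hasDerivAt_intervalIntegral_of_continuous_deriv {F : Type*} [NormedAddCommGroup F]
    [NormedSpace ℝ F] {G G' : ℝ → ℝ → F} {a b x₀ : ℝ} (hG : ∀ x, Continuous (G x))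
    (hG' : Continuous (Function.uncurry G'))
    (hderiv : ∀ x t, HasDerivAt (G · t) (G' x t) x) :
    HasDerivAt (fun x => ∫ t in a..b, G x t) (∫ t in a..b, G' x₀ t) x₀ := by
  obtain ⟨C, hC⟩ := (isCompact_closedBall x₀ 1 |>.prod isCompact_uIcc)
    |>.exists_bound_of_continuousOn hG'.continuousOn
  refine (intervalIntegral.hasDerivAt_integral_of_dominated_loc_of_deriv_le (bound := fun _ => C)
    (Metric.ball_mem_nhds x₀ one_pos) (.of_forall fun x => (hG x).aestronglyMeasurable)
    ((hG x₀).intervalIntegrable a b)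
    (hG'.comp (Continuous.prodMk_right x₀)).aestronglyMeasurable
    (.of_forall fun t ht x hx => hC (x, t) ⟨Metric.ball_subset_closedBall hx, uIoc_subset_uIcc ht⟩)
    intervalIntegrable_const (.of_forall fun t _ x _ => hderiv x t)).2

theorem integral_inner_deriv_add_deriv_inner_eq_sub {a b : ℝ} {p δ : ℝ → E}
    (hp : ContDiff ℝ 1 p) (hδ : ContDiff ℝ 1 δ) :
    ∫ t in a..b, (⟪p t, deriv δ t⟫ + ⟪deriv p t, δ t⟫) = ⟪p b, δ b⟫ - ⟪p a, δ a⟫ := by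
  have hp' := hp.continuous_deriv le_rfl
  have hδ' := hδ.continuous_deriv le_rfl
  exact intervalIntegral.integral_eq_sub_of_hasDerivAt
    (fun t _ => (hp.differentiable one_ne_zero t).hasDerivAt.inner ℝ
      (hδ.differentiable one_ne_zero t).hasDerivAt)
    ((by fun_prop : Continuous fun t => ⟪p t, deriv δ t⟫ + ⟪deriv p t, δ t⟫).intervalIntegrable a b)

theorem eqOn_zero_of_integral_inner_eq_zero [CompleteSpace E] {a b : ℝ} (hab : a < b)
    {g : ℝ → E} (hg : Continuous g)
    (h : ∀ δ : ℝ → E, ContDiff ℝ 1 δ → δ a = 0 → δ b = 0 → ∫ t in a..b, ⟪δ t, g t⟫ = 0) :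
    EqOn g 0 (Icc a b) := by
  have hae : ∀ᵐ t ∂volume.restrict (Ioo a b), t ∈ Ioo a b → g t = 0 := by
    refine isOpen_Ioo.ae_eq_zero_of_integral_contDiff_smul_eq_zero
      (hg.locallyIntegrable.locallyIntegrableOn _) fun φ hφ _ hφU => ?_
    -- the variation `φ • w` with `w = ∫ φ • g` pairs with `g` to `‖w‖²`
    set w := ∫ t in Ioo a b, φ t • g t
    have hφ_end : ∀ x ∉ Ioo a b, φ x = 0 := fun x hx =>
      image_eq_zero_of_notMem_tsupport (fun hx' => hx (hφU hx'))
    have hδ := h (fun t => φ t • w) ((hφ.of_le (by norm_num)).smul contDiff_const)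
      (by simp [hφ_end a (by simp)]) (by simp [hφ_end b (by simp)])
    have hint : IntegrableOn (fun t => φ t • g t) (Ioo a b) :=
      (hφ.continuous.smul hg).integrableOn_Icc.mono_set Ioo_subset_Icc_self
    refine (inner_self_eq_zero (𝕜 := ℝ)).mp ?_
    calc ⟪w, w⟫ = ∫ t in Ioo a b, ⟪w, φ t • g t⟫ := (integral_inner hint w).symm
      _ = ∫ t in a..b, ⟪φ t • w, g t⟫ := by
        simp only [real_inner_smul_left, real_inner_smul_right,
          intervalIntegral.integral_of_le hab.le, integral_Ioc_eq_integral_Ioo]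
      _ = 0 := hδ
  have hIoo : EqOn g 0 (Ioo a b) :=
    Measure.eqOn_open_of_ae_eq
      (by filter_upwards [hae, ae_restrict_mem measurableSet_Ioo] with t ht htU using ht htU)
      isOpen_Ioo hg.continuousOn continuousOn_const
  simpa [closure_Ioo hab.ne] using hIoo.closure hg continuous_const

def adjointAction (f : E → E) (t₀ t₁ : ℝ) (q p : ℝ → E) : ℝ :=
  ∫ t in t₀..t₁, (⟪p t, deriv q t⟫ - ⟪p t, f (q t)⟫)

theorem hasDerivAt_adjointAction_line {f : E → E} (hf : ContDiff ℝ 1 f) (t₀ t₁ : ℝ)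
    {q p δq δp : ℝ → E} (hq : ContDiff ℝ 1 q) (hp : Continuous p) (hδq : ContDiff ℝ 1 δq)
    (hδp : Continuous δp) :
    HasDerivAt (fun ε : ℝ => adjointAction f t₀ t₁ (q + ε • δq) (p + ε • δp))
      (∫ t in t₀..t₁, (⟪p t, deriv δq t⟫ + ⟪δp t, deriv q t⟫
        - (⟪p t, fderiv ℝ f (q t) (δq t)⟫ + ⟪δp t, f (q t)⟫))) 0 := by
  have hderiv_line : ∀ ε : ℝ, deriv (q + ε • δq) = deriv q + ε • deriv δq := fun ε =>
    funext fun t => ((hq.differentiable one_ne_zero t).hasDerivAt.add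
      ((hδq.differentiable one_ne_zero t).hasDerivAt.const_smul ε)).deriv
  have hq' := hq.continuous_deriv le_rfl
  have hδq' := hδq.continuous_deriv le_rfl
  have hDf := hf.continuous_fderiv one_ne_zero
  have hline : ∀ (v w : E) (ε : ℝ), HasDerivAt (fun ε : ℝ => v + ε • w) w ε := fun v w ε => by
    simpa using ((hasDerivAt_id ε).smul_const w).const_add v
  simp only [adjointAction, hderiv_line, Pi.add_apply, Pi.smul_apply]
  refine .congr_deriv (hasDerivAt_intervalIntegral_of_continuous_deriv
    (G' := fun ε t => ⟪p t + ε • δp t, deriv δq t⟫ + ⟪δp t, deriv q t + ε • deriv δq t⟫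
      - (⟪p t + ε • δp t, fderiv ℝ f (q t + ε • δq t) (δq t)⟫ + ⟪δp t, f (q t + ε • δq t)⟫))
    (fun ε => by fun_prop) (by fun_prop) fun ε t => ?_) (by simp)
  exact ((hline _ _ ε).inner ℝ (hline _ _ ε)).sub ((hline _ _ ε).inner ℝ
    ((hf.differentiable one_ne_zero _).hasFDerivAt.comp_hasDerivAt ε (hline _ _ ε)))

theorem deriv_adjointAction_line [CompleteSpace E] {f : E → E} (hf : ContDiff ℝ 1 f) {t₀ t₁ : ℝ}
    {q p δq δp : ℝ → E} (hq : ContDiff ℝ 1 q) (hp : ContDiff ℝ 1 p) (hδq : ContDiff ℝ 1 δq)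
    (hδp : Continuous δp) (hδq₀ : δq t₀ = 0) (hδq₁ : δq t₁ = 0) :
    deriv (fun ε : ℝ => adjointAction f t₀ t₁ (q + ε • δq) (p + ε • δp)) 0 =
      ∫ t in t₀..t₁, (⟪δp t, deriv q t - f (q t)⟫
        - ⟪δq t, deriv p t + ((fderiv ℝ f (q t))†) (p t)⟫) := by
  have hq' := hq.continuous_deriv le_rfl
  have hp' := hp.continuous_deriv le_rfl
  have hδq' := hδq.continuous_deriv le_rfl
  have hDf := hf.continuous_fderiv one_ne_zero
  have hboundary := integral_inner_deriv_add_deriv_inner_eq_sub (a := t₀) (b := t₁) hp hδq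
  rw [hδq₀, hδq₁, inner_zero_right, inner_zero_right, sub_zero] at hboundary
  rw [(hasDerivAt_adjointAction_line hf t₀ t₁ hq hp.continuous hδq hδp).deriv,
    ← sub_zero (∫ _ in _.._, _), ← hboundary,
    ← intervalIntegral.integral_sub ((by fun_prop : Continuous _).intervalIntegrable _ _)
      ((by fun_prop : Continuous _).intervalIntegrable _ _)]
  congr 1 with t
  simp only [inner_sub_right, inner_add_right, ContinuousLinearMap.adjoint_inner_right]
  rw [real_inner_comm (deriv p t), real_inner_comm (p t)]
  ring

/-- the Gateaux derivative of the adjoint action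
`S(q,p) = ∫ (⟨p, q̇⟩ − ⟨p, f(q)⟩) dt` vanishes for all variations `(δq, δp)` with
`δq(t₀) = δq(t₁) = 0` iff `(q,p)` solves the adjoint system
`q̇ = f(q)`, `ṗ = −Df(q)ᵀ p` on `[t₀, t₁]`. -/
theorem adjoint_variational_principle {n : ℕ} (f : Euc n → Euc n) (hf : ContDiff ℝ 1 f)
    (t₀ t₁ : ℝ) (ht : t₀ < t₁) (q p : ℝ → Euc n)
    (hq : ContDiff ℝ 1 q) (hp : ContDiff ℝ 1 p) :
    (∀ δq δp : ℝ → Euc n, ContDiff ℝ 1 δq → ContDiff ℝ 1 δp →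
        δq t₀ = 0 → δq t₁ = 0 →
        deriv (fun ε : ℝ =>
          ∫ t in t₀..t₁,
            (⟪p t + ε • δp t, deriv (fun s => q s + ε • δq s) t⟫
              - ⟪p t + ε • δp t, f (q t + ε • δq t)⟫)) 0 = 0)
    ↔ (∀ t ∈ Set.Icc t₀ t₁,
        deriv q t = f (q t) ∧ deriv p t = -(jacT f (q t) (p t))) := by
  have hq' := hq.continuous_deriv le_rfl
  have hp' := hp.continuous_deriv le_rfl
  have hDf := hf.continuous_fderiv one_ne_zero
  have hDfT : Continuous fun t => jacT f (q t) :=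
    (ContinuousLinearMap.adjoint).continuous.comp (by fun_prop)
  constructor
  · intro H t htI
    have hq_res := eqOn_zero_of_integral_inner_eq_zero ht (g := fun t => deriv q t - f (q t))
      (by fun_prop) fun δ hδ _ _ => by
        simpa using
          (deriv_adjointAction_line hf hq hp contDiff_const hδ.continuous rfl rfl).symm.trans
            (H (fun _ => 0) δ contDiff_const hδ rfl rfl)
    have hp_res := eqOn_zero_of_integral_inner_eq_zero ht
      (g := fun t => deriv p t + jacT f (q t) (p t)) (by fun_prop) fun δ hδ h₀ h₁ => by
        simpa [jacT] using (deriv_adjointAction_line hf hq hp hδ continuous_const h₀ h₁).symm.trans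
          (H δ (fun _ => 0) hδ contDiff_const h₀ h₁)
    exact ⟨sub_eq_zero.mp (hq_res htI), eq_neg_of_add_eq_zero_left (hp_res htI)⟩
  · intro H δq δp hδq hδp h₀ h₁
    refine (deriv_adjointAction_line hf hq hp hδq hδp.continuous h₀ h₁).trans ?_
    refine (intervalIntegral.integral_congr fun t ht' => ?_).trans intervalIntegral.integral_zero
    obtain ⟨hq_eq, hp_eq⟩ := H t (Set.uIcc_of_le ht.le ▸ ht')
    simp [hq_eq, hp_eq, jacT]

end
end

section
/- Let f, g : ℝⁿ → ℝⁿ be continuously differentiable with vanishing Lie bracket, i.e., Df(q) g(q) − Dg(q) f(q) = 0 for all q ∈ ℝⁿ. Then for every continuously differentiable solution (q,p) : [t₀,t₁] → ℝⁿ × ℝⁿ of the adjoint system q̇ = f(q), ṗ = −Df(q)ᵀ p, the function t ↦ ⟨p(t), g(q(t))⟩ is constant on [t₀,t₁]. -/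
/-! Along a solution of the adjoint system, the derivative of `⟨p, g(q)⟩` is
`⟨p, Dg(q) f(q)⟩ - ⟨Df(q)ᵀ p, g(q)⟩ = -⟨p, [g,f](q)⟩`, which vanishes when `g` and `f` commute;
a function with zero derivative on `[t₀, t₁]` is constant there. -/

open scoped RealInnerProductSpace

noncomputable section

open ContinuousLinearMap VectorField

section

variable {E : Type*} [NormedAddCommGroup E] [InnerProductSpace ℝ E] [CompleteSpace E]

theorem hasDerivAt_inner_apply_of_hasDerivAt_adjoint {g : E → E} {q p : ℝ → E} {v : E}
    {A : E →L[ℝ] E} {t : ℝ} (hg : DifferentiableAt ℝ g (q t)) (hq : HasDerivAt q v t)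
    (hp : HasDerivAt p (-(adjoint A (p t))) t) :
    HasDerivAt (fun s ↦ ⟪p s, g (q s)⟫) ⟪p t, fderiv ℝ g (q t) v - A (g (q t))⟫ t := by
  refine (hp.inner ℝ (hg.hasFDerivAt.comp_hasDerivAt t hq)).congr_deriv ?_
  rw [inner_sub_right, inner_neg_left, adjoint_inner_left, Function.comp_apply]
  ring

theorem hasDerivAt_inner_apply_adjoint_flow {f g : E → E} {q p : ℝ → E} {t : ℝ}
    (hg : DifferentiableAt ℝ g (q t)) (hq : HasDerivAt q (f (q t)) t)
    (hp : HasDerivAt p (-(adjoint (fderiv ℝ f (q t)) (p t))) t) :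
    HasDerivAt (fun s ↦ ⟪p s, g (q s)⟫) (-⟪p t, lieBracket ℝ g f (q t)⟫) t := by
  refine (hasDerivAt_inner_apply_of_hasDerivAt_adjoint hg hq hp).congr_deriv ?_
  rw [lieBracket_eq, ← inner_neg_right, neg_sub]

end

theorem adjoint_symmetry_conservation_general {n : ℕ} (f g : Euc n → Euc n)
    (hg : ContDiff ℝ 1 g)
    (hbracket : ∀ x : Euc n, fderiv ℝ f x (g x) - fderiv ℝ g x (f x) = 0)
    (t₀ t₁ : ℝ) (q p : ℝ → Euc n)
    (hqode : ∀ t ∈ Set.Icc t₀ t₁, HasDerivAt q (f (q t)) t)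
    (hpode : ∀ t ∈ Set.Icc t₀ t₁, HasDerivAt p (-(jacT f (q t) (p t))) t) :
    ∀ s ∈ Set.Icc t₀ t₁, ∀ t ∈ Set.Icc t₀ t₁, ⟪p s, g (q s)⟫ = ⟪p t, g (q t)⟫ := by
  have hderiv : ∀ t ∈ Set.Icc t₀ t₁, HasDerivAt (fun s ↦ ⟪p s, g (q s)⟫) 0 t := by
    intro t ht
    have hzero : lieBracket ℝ g f (q t) = 0 := hbracket (q t)
    simpa [hzero] using hasDerivAt_inner_apply_adjoint_flow
      (hg.differentiable one_ne_zero (q t)) (hqode t ht) (hpode t ht)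
  have hconst := constant_of_has_deriv_right_zero
    (fun t ht ↦ (hderiv t ht).continuousAt.continuousWithinAt)
    (fun t ht ↦ (hderiv t (Set.mem_Icc_of_Ico ht)).hasDerivWithinAt)
  intro s hs t ht
  rw [hconst s hs, hconst t ht]

/-- if `[g,f] = 0`, then `⟨p, g(q)⟩` is conserved along solutions
of the adjoint system `q̇ = f(q)`, `ṗ = −Df(q)ᵀ p`. -/
theorem adjoint_symmetry_conservation {n : ℕ} (f g : Euc n → Euc n)
    (hf : ContDiff ℝ 1 f) (hg : ContDiff ℝ 1 g)
    (hbracket : ∀ x : Euc n, fderiv ℝ f x (g x) - fderiv ℝ g x (f x) = 0)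
    (t₀ t₁ : ℝ) (q p : ℝ → Euc n)
    (hq : ContDiff ℝ 1 q) (hp : ContDiff ℝ 1 p)
    (hqode : ∀ t ∈ Set.Icc t₀ t₁, HasDerivAt q (f (q t)) t)
    (hpode : ∀ t ∈ Set.Icc t₀ t₁, HasDerivAt p (-(jacT f (q t) (p t))) t) :
    ∀ s ∈ Set.Icc t₀ t₁, ∀ t ∈ Set.Icc t₀ t₁, ⟪p s, g (q s)⟫ = ⟪p t, g (q t)⟫ :=
  adjoint_symmetry_conservation_general f g hg hbracket t₀ t₁ q p hqode hpode

end
end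

section
/- Let f, g : ℝⁿ → ℝⁿ and L : ℝⁿ → ℝ be continuously differentiable such that Df(q) g(q) − Dg(q) f(q) = 0 and ⟨∇L(q), g(q)⟩ = 0 for all q ∈ ℝⁿ. Then for every continuously differentiable solution (q,p) : [t₀,t₁] → ℝⁿ × ℝⁿ of the augmented adjoint system q̇ = f(q), ṗ = −Df(q)ᵀ p − ∇L(q), the function t ↦ ⟨p(t), g(q(t))⟩ is constant on [t₀,t₁]. -/
open scoped RealInnerProductSpace

noncomputable section

/-!
Differentiating along a solution, `d/dt ⟨p, g(q)⟩ = ⟨-Df(q)ᵀ p - ∇L(q), g(q)⟩ + ⟨p, Dg(q) f(q)⟩`.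
Moving the transpose across the inner product turns this into
`-⟨p, [g,f](q)⟩ - ⟨∇L(q), g(q)⟩`, which vanishes when `g` commutes with `f` and leaves `L`
invariant.
-/

open VectorField

theorem Convex.eq_of_forall_hasDerivAt_zero {E : Type*} [NormedAddCommGroup E]
    [NormedSpace ℝ E] {s : Set ℝ} {φ : ℝ → E} (hs : Convex ℝ s)
    (hφ : ∀ t ∈ s, HasDerivAt φ 0 t) {x y : ℝ} (hx : x ∈ s) (hy : y ∈ s) : φ x = φ y := by
  have h := hs.norm_image_sub_le_of_norm_hasDerivWithin_le
    (fun t ht ↦ (hφ t ht).hasDerivWithinAt) (fun _ _ ↦ norm_zero.le) hy hx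
  rwa [zero_mul, norm_le_zero_iff, sub_eq_zero] at h

section AdjointSystem

variable {E : Type*} [NormedAddCommGroup E] [InnerProductSpace ℝ E] [CompleteSpace E]
  {f g : E → E} {L : E → ℝ} {q p : ℝ → E} {t : ℝ}

theorem hasDerivAt_inner_comp_of_adjoint_system (hg : DifferentiableAt ℝ g (q t))
    (hq : HasDerivAt q (f (q t)) t)
    (hp : HasDerivAt p (-(fderiv ℝ f (q t)).adjoint (p t) - gradient L (q t)) t) :
    HasDerivAt (fun t ↦ ⟪p t, g (q t)⟫)
      (-⟪p t, lieBracket ℝ g f (q t)⟫ - ⟪gradient L (q t), g (q t)⟫) t := by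
  have hgq : HasDerivAt (fun t ↦ g (q t)) (fderiv ℝ g (q t) (f (q t))) t :=
    hg.hasFDerivAt.comp_hasDerivAt t hq
  refine (hp.inner ℝ hgq).congr_deriv ?_
  simp only [lieBracket, inner_sub_left, inner_sub_right, inner_neg_left,
    ContinuousLinearMap.adjoint_inner_left]
  ring

end AdjointSystem

theorem augmented_adjoint_symmetry_conservation_general {n : ℕ} (f g : Euc n → Euc n) (L : Euc n → ℝ)
    (hg : ContDiff ℝ 1 g)
    (hbracket : ∀ x : Euc n, fderiv ℝ f x (g x) - fderiv ℝ g x (f x) = 0)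
    (hLinv : ∀ x : Euc n, ⟪gradient L x, g x⟫ = 0)
    (t₀ t₁ : ℝ) (q p : ℝ → Euc n)
    (hqode : ∀ t ∈ Set.Icc t₀ t₁, HasDerivAt q (f (q t)) t)
    (hpode : ∀ t ∈ Set.Icc t₀ t₁,
      HasDerivAt p (-(jacT f (q t) (p t)) - gradient L (q t)) t) :
    ∀ s ∈ Set.Icc t₀ t₁, ∀ t ∈ Set.Icc t₀ t₁, ⟪p s, g (q s)⟫ = ⟪p t, g (q t)⟫ := by
  have hderiv : ∀ t ∈ Set.Icc t₀ t₁, HasDerivAt (fun t ↦ ⟪p t, g (q t)⟫) 0 t := by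
    intro t ht
    have h := hasDerivAt_inner_comp_of_adjoint_system
      (hg.differentiable one_ne_zero (q t)) (hqode t ht) (hpode t ht)
    rwa [lieBracket, hbracket, hLinv, inner_zero_right, neg_zero, sub_zero] at h
  exact fun s hs t ht ↦ (convex_Icc t₀ t₁).eq_of_forall_hasDerivAt_zero hderiv hs ht

/-- if `[g,f] = 0` and `⟨∇L, g⟩ = 0`, then `⟨p, g(q)⟩` is conserved
along solutions of the augmented adjoint system `q̇ = f(q)`, `ṗ = −Df(q)ᵀ p − ∇L(q)`. -/
theorem augmented_adjoint_symmetry_conservation {n : ℕ} (f g : Euc n → Euc n) (L : Euc n → ℝ)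
    (hf : ContDiff ℝ 1 f) (hg : ContDiff ℝ 1 g) (hL : ContDiff ℝ 1 L)
    (hbracket : ∀ x : Euc n, fderiv ℝ f x (g x) - fderiv ℝ g x (f x) = 0)
    (hLinv : ∀ x : Euc n, ⟪gradient L x, g x⟫ = 0)
    (t₀ t₁ : ℝ) (q p : ℝ → Euc n)
    (hq : ContDiff ℝ 1 q) (hp : ContDiff ℝ 1 p)
    (hqode : ∀ t ∈ Set.Icc t₀ t₁, HasDerivAt q (f (q t)) t)
    (hpode : ∀ t ∈ Set.Icc t₀ t₁,
      HasDerivAt p (-(jacT f (q t) (p t)) - gradient L (q t)) t) :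
    ∀ s ∈ Set.Icc t₀ t₁, ∀ t ∈ Set.Icc t₀ t₁, ⟪p s, g (q s)⟫ = ⟪p t, g (q t)⟫ :=
  augmented_adjoint_symmetry_conservation_general f g L hg hbracket hLinv t₀ t₁ q p hqode hpode
end
end

section
/- Let f : ℝⁿ → ℝⁿ be continuously differentiable. Suppose q₀, q₁, p₀, p₁ ∈ ℝⁿ and internal stages Qⁱ, Pⁱ ∈ ℝⁿ (i = 1,…,s) satisfy the symplectic partitioned Runge–Kutta equations: q₁ = q₀ + Δt·Σᵢ bᵢ f(Qⁱ); Qⁱ = q₀ + Δt·Σⱼ aᵢⱼ f(Qʲ); p₁ = p₀ − Δt·Σᵢ bᵢ Df(Qⁱ)ᵀ Pⁱ; Pⁱ = p₀ − Δt·Σⱼ ãᵢⱼ Df(Qʲ)ᵀ Pʲ. Suppose further that δq₀, δq₁, δQⁱ ∈ ℝⁿ satisfy the discrete variational equations δq₁ = δq₀ + Δt·Σᵢ bᵢ Df(Qⁱ) δQⁱ and δQⁱ = δq₀ + Δt·Σⱼ aᵢⱼ Df(Qʲ) δQʲ. Then ⟨p₁, δq₁⟩ = ⟨p₀, δq₀⟩.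 -/
/-! The Jacobian `Df(Qⁱ)` drives the variations and its adjoint drives the costates, so at each
stage `⟪Df(Qⁱ)ᵀ Pⁱ, δQⁱ⟫ = ⟪Pⁱ, Df(Qⁱ) δQⁱ⟫`. Expanding `⟪p₁, δq₁⟫` bilinearly and eliminating
`p₀`, `δq₀` through the stage equations, these stage terms cancel and what is left is
`Δt² ∑ᵢⱼ (bᵢ bⱼ - bᵢ aᵢⱼ - bⱼ ãⱼᵢ) ⟪Df(Qⁱ)ᵀ Pⁱ, Df(Qʲ) δQʲ⟫`, which vanishes by the symplectic
condition. -/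

open scoped RealInnerProductSpace

open Finset

noncomputable section

section PartitionedRungeKutta

variable {E : Type*} [NormedAddCommGroup E] [InnerProductSpace ℝ E] {ι : Type*} [Fintype ι]

theorem inner_sub_smul_sum_add_smul_sum (h : ℝ) (b : ι → ℝ) (p x : E) (l k : ι → E) :
    ⟪p - h • ∑ i, b i • l i, x + h • ∑ j, b j • k j⟫ =
      ⟪p, x⟫ + h * ∑ j, b j * ⟪p, k j⟫ - h * ∑ i, b i * ⟪l i, x⟫
        - h ^ 2 * ∑ i, ∑ j, b i * b j * ⟪l i, k j⟫ := by
  simp only [inner_sub_left, inner_add_right, real_inner_smul_left, real_inner_smul_right,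
    sum_inner, inner_sum, mul_sum]
  ring_nf
  rw [sum_comm (f := fun j i => h ^ 2 * b j * b i * ⟪l i, k j⟫)]
  congr 1
  exact sum_congr rfl fun _ _ => sum_congr rfl fun _ _ => by ring

theorem sum_mul_sum_add_sum_mul_sum_of_symplectic {a a' : ι → ι → ℝ} {b : ι → ℝ}
    (hsym : ∀ i j, b i * a' i j + b j * a j i = b i * b j) (G : ι → ι → ℝ) :
    ∑ j, b j * ∑ i, a' j i * G i j + ∑ i, b i * ∑ j, a i j * G i j =
      ∑ i, ∑ j, b i * b j * G i j := by
  calc _ = ∑ i, ∑ j, (b j * a' j i + b i * a i j) * G i j := by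
        simp only [mul_sum, add_mul, sum_add_distrib, mul_assoc]
        rw [sum_comm (f := fun j i => b j * (a' j i * G i j))]
    _ = _ := by simp only [hsym, mul_comm (b _) (b _)]

theorem inner_conserved_of_symplectic {a a' : ι → ι → ℝ} {b : ι → ℝ}
    (hsym : ∀ i j, b i * a' i j + b j * a j i = b i * b j) (h : ℝ)
    {p₀ p₁ x₀ x₁ : E} {P X l k : ι → E}
    (hp₁ : p₁ = p₀ - h • ∑ i, b i • l i) (hP : ∀ i, P i = p₀ - h • ∑ j, a' i j • l j)
    (hx₁ : x₁ = x₀ + h • ∑ i, b i • k i) (hX : ∀ i, X i = x₀ + h • ∑ j, a i j • k j)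
    (hlk : ∀ i, ⟪l i, X i⟫ = ⟪P i, k i⟫) :
    ⟪p₁, x₁⟫ = ⟪p₀, x₀⟫ := by
  have hp₀k : ∀ j, ⟪p₀, k j⟫ = ⟪P j, k j⟫ + h * ∑ i, a' j i * ⟪l i, k j⟫ := by
    intro j
    rw [hP j, inner_sub_left, real_inner_smul_left, sum_inner]
    simp only [real_inner_smul_left]
    ring
  have hlx₀ : ∀ i, ⟪l i, x₀⟫ = ⟪P i, k i⟫ - h * ∑ j, a i j * ⟪l i, k j⟫ := by
    intro i
    rw [← hlk i, hX i, inner_add_right, real_inner_smul_right, inner_sum]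
    simp only [real_inner_smul_right]
    ring
  have hbp₀k : ∑ j, b j * ⟪p₀, k j⟫ =
      ∑ j, b j * ⟪P j, k j⟫ + h * ∑ j, b j * ∑ i, a' j i * ⟪l i, k j⟫ := by
    rw [mul_sum, ← sum_add_distrib]
    exact sum_congr rfl fun j _ => by rw [hp₀k]; ring
  have hblx₀ : ∑ i, b i * ⟪l i, x₀⟫ =
      ∑ i, b i * ⟪P i, k i⟫ - h * ∑ i, b i * ∑ j, a i j * ⟪l i, k j⟫ := by
    rw [mul_sum, ← sum_sub_distrib]
    exact sum_congr rfl fun i _ => by rw [hlx₀]; ring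
  rw [hp₁, hx₁, inner_sub_smul_sum_add_smul_sum, hbp₀k, hblx₀]
  linear_combination h ^ 2 * sum_mul_sum_add_sum_mul_sum_of_symplectic hsym (⟪l ·, k ·⟫)

end PartitionedRungeKutta

theorem discrete_adjoint_quadratic_invariant_general {n s : ℕ}
    (f : Euc n → Euc n)
    (Δt : ℝ)
    (a a' : Fin s → Fin s → ℝ) (b : Fin s → ℝ)
    (hsym : ∀ i j, b i * a' i j + b j * a j i = b i * b j)
    (p₀ p₁ : Euc n) (Q P : Fin s → Euc n)
    (hp1 : p₁ = p₀ - Δt • ∑ i, b i • jacT f (Q i) (P i))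
    (hP : ∀ i, P i = p₀ - Δt • ∑ j, a' i j • jacT f (Q j) (P j))
    (δq₀ δq₁ : Euc n) (δQ : Fin s → Euc n)
    (hδq1 : δq₁ = δq₀ + Δt • ∑ i, b i • fderiv ℝ f (Q i) (δQ i))
    (hδQ : ∀ i, δQ i = δq₀ + Δt • ∑ j, a i j • fderiv ℝ f (Q j) (δQ j)) :
    ⟪p₁, δq₁⟫ = ⟪p₀, δq₀⟫ :=
  inner_conserved_of_symplectic hsym Δt hp1 hP hδq1 hδQ fun _ =>
    ContinuousLinearMap.adjoint_inner_left _ _ _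

/-- the symplectic partitioned Runge–Kutta discretization of the adjoint
ODE system preserves the discrete quadratic invariant: `⟨p₁, δq₁⟩ = ⟨p₀, δq₀⟩`. -/
theorem discrete_adjoint_quadratic_invariant {n s : ℕ} (hs : 1 ≤ s)
    (f : Euc n → Euc n) (hf : ContDiff ℝ 1 f)
    (Δt : ℝ) (hΔt : 0 < Δt)
    (a a' : Fin s → Fin s → ℝ) (b : Fin s → ℝ)
    (hsym : ∀ i j, b i * a' i j + b j * a j i = b i * b j)
    (q₀ q₁ p₀ p₁ : Euc n) (Q P : Fin s → Euc n)
    (hq1 : q₁ = q₀ + Δt • ∑ i, b i • f (Q i))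
    (hQ : ∀ i, Q i = q₀ + Δt • ∑ j, a i j • f (Q j))
    (hp1 : p₁ = p₀ - Δt • ∑ i, b i • jacT f (Q i) (P i))
    (hP : ∀ i, P i = p₀ - Δt • ∑ j, a' i j • jacT f (Q j) (P j))
    (δq₀ δq₁ : Euc n) (δQ : Fin s → Euc n)
    (hδq1 : δq₁ = δq₀ + Δt • ∑ i, b i • fderiv ℝ f (Q i) (δQ i))
    (hδQ : ∀ i, δQ i = δq₀ + Δt • ∑ j, a i j • fderiv ℝ f (Q j) (δQ j)) :
    ⟪p₁, δq₁⟫ = ⟪p₀, δq₀⟫ :=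
  discrete_adjoint_quadratic_invariant_general f Δt a a' b hsym p₀ p₁ Q P hp1 hP δq₀ δq₁ δQ hδq1 hδQ

end
end

section
/- Let f : ℝⁿ → ℝⁿ and L : ℝⁿ → ℝ be continuously differentiable. Suppose q₀, q₁, p₀, p₁ ∈ ℝⁿ and internal stages Qⁱ, Pⁱ ∈ ℝⁿ (i = 1,…,s) satisfy: q₁ = q₀ + Δt·Σᵢ bᵢ f(Qⁱ); Qⁱ = q₀ + Δt·Σⱼ aᵢⱼ f(Qʲ); p₁ = p₀ − Δt·Σᵢ bᵢ ( Df(Qⁱ)ᵀ Pⁱ + ∇L(Qⁱ) ); Pⁱ = p₀ − Δt·Σⱼ ãᵢⱼ ( Df(Qʲ)ᵀ Pʲ + ∇L(Qʲ) ). Suppose further that δq₀, δq₁, δQⁱ ∈ ℝⁿ satisfy the discrete variational equations δq₁ = δq₀ + Δt·Σᵢ bᵢ Df(Qⁱ) δQⁱ and δQⁱ = δq₀ + Δt·Σⱼ aᵢⱼ Df(Qʲ) δQʲ. Then ⟨p₁, δq₁⟩ = ⟨p₀, δq₀⟩ − Δt·Σᵢ bᵢ ⟨∇L(Qⁱ),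 δQⁱ⟩. -/
/-!
For a partitioned Runge–Kutta pair satisfying `bᵢ ãᵢⱼ + bⱼ aⱼᵢ = bᵢ bⱼ`, any bilinear pairing `B`
between the two partitions obeys the discrete product rule
`B p₁ δq₁ = B p₀ δq₀ + Δt Σᵢ bᵢ (B Pⁱ vⁱ − B gⁱ δQⁱ)`, where `gⁱ`, `vⁱ` are the stage slopes:
expanding both sides, the `Δt²` terms cancel exactly by the symplectic condition. For the adjoint
system with `B = ⟪·,·⟫`, `gⁱ = Df(Qⁱ)ᵀPⁱ + ∇L(Qⁱ)` and `vⁱ = Df(Qⁱ)δQⁱ`, the transpose makes each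
stage defect collapse to `−⟪∇L(Qⁱ), δQⁱ⟫`.
-/

open scoped RealInnerProductSpace

noncomputable section

open Finset

section

section

variable {ι R E F G : Type*} [Fintype ι] [CommRing R]
  [AddCommGroup E] [Module R E] [AddCommGroup F] [Module R F] [AddCommGroup G] [Module R G]

theorem sum_sum_smul_add_of_symplectic {a a' : ι → ι → R} {b : ι → R}
    (hsym : ∀ i j, b i * a' i j + b j * a j i = b i * b j) (c : ι → ι → G) :
    ∑ i, ∑ j, (b i * a' i j) • c j i + ∑ i, ∑ j, (b i * a i j) • c i j
      = ∑ i, ∑ j, (b i * b j) • c j i := by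
  rw [sum_comm (f := fun i j => (b i * a i j) • c i j), ← sum_add_distrib]
  refine sum_congr rfl fun i _ => ?_
  rw [← sum_add_distrib]
  refine sum_congr rfl fun j _ => ?_
  rw [← add_smul, hsym]

variable (B : E →ₗ[R] F →ₗ[R] G) (Δt : R)

theorem sum_smul_apply_sub_smul_sum_left (a : ι → ι → R) (b : ι → R) (p₀ : E) (g : ι → E)
    (v : ι → F) :
    ∑ i, b i • B (p₀ - Δt • ∑ j, a i j • g j) (v i)
      = ∑ i, b i • B p₀ (v i) - Δt • ∑ i, ∑ j, (b i * a i j) • B (g j) (v i) := by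
  simp only [map_sub, map_smul, map_sum, LinearMap.sub_apply, LinearMap.smul_apply,
    LinearMap.sum_apply, smul_sub, sum_sub_distrib, smul_sum, mul_smul]
  congr 1
  exact sum_congr rfl fun i _ => sum_congr rfl fun j _ => smul_comm _ _ _

theorem sum_smul_apply_add_smul_sum_right (a : ι → ι → R) (b : ι → R) (g : ι → E) (q₀ : F)
    (v : ι → F) :
    ∑ i, b i • B (g i) (q₀ + Δt • ∑ j, a i j • v j)
      = ∑ i, b i • B (g i) q₀ + Δt • ∑ i, ∑ j, (b i * a i j) • B (g i) (v j) := by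
  simp only [map_add, map_smul, map_sum, smul_add, sum_add_distrib, smul_sum, mul_smul]
  congr 1
  exact sum_congr rfl fun i _ => sum_congr rfl fun j _ => smul_comm _ _ _

theorem apply_sub_smul_sum_add_smul_sum (b : ι → R) (p₀ : E) (g : ι → E) (q₀ : F)
    (v : ι → F) :
    B (p₀ - Δt • ∑ i, b i • g i) (q₀ + Δt • ∑ i, b i • v i)
      = B p₀ q₀ + Δt • ∑ i, b i • B p₀ (v i) - Δt • ∑ i, b i • B (g i) q₀
        - Δt • Δt • ∑ i, ∑ j, (b i * b j) • B (g j) (v i) := by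
  simp only [map_sub, map_add, map_smul, map_sum, LinearMap.sub_apply,
    LinearMap.smul_apply, LinearMap.sum_apply, smul_sum, smul_sub, sum_sub_distrib, smul_smul]
  ring_nf
  abel

theorem apply_eq_add_smul_sum_of_symplectic {a a' : ι → ι → R} {b : ι → R}
    (hsym : ∀ i j, b i * a' i j + b j * a j i = b i * b j)
    {p₀ p₁ : E} {P g : ι → E} {q₀ q₁ : F} {Q v : ι → F}
    (hp₁ : p₁ = p₀ - Δt • ∑ i, b i • g i) (hP : ∀ i, P i = p₀ - Δt • ∑ j, a' i j • g j)
    (hq₁ : q₁ = q₀ + Δt • ∑ i, b i • v i) (hQ : ∀ i, Q i = q₀ + Δt • ∑ j, a i j • v j) :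
    B p₁ q₁ = B p₀ q₀ + Δt • ∑ i, b i • (B (P i) (v i) - B (g i) (Q i)) := by
  simp only [smul_sub, sum_sub_distrib, hP, hQ, hp₁, hq₁,
    sum_smul_apply_sub_smul_sum_left, sum_smul_apply_add_smul_sum_right,
    apply_sub_smul_sum_add_smul_sum, ← sum_sum_smul_add_of_symplectic hsym]
  module

end

theorem inner_jacT_apply_left {n : ℕ} (f : Euc n → Euc n) (q p x : Euc n) :
    ⟪jacT f q p, x⟫ = ⟪p, fderiv ℝ f q x⟫ :=
  ContinuousLinearMap.adjoint_inner_left _ _ _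

theorem discrete_augmented_adjoint_quadratic_identity_general {n s : ℕ}
    (f : Euc n → Euc n) (L : Euc n → ℝ)
    (Δt : ℝ)
    (a a' : Fin s → Fin s → ℝ) (b : Fin s → ℝ)
    (hsym : ∀ i j, b i * a' i j + b j * a j i = b i * b j)
    (p₀ p₁ : Euc n) (Q P : Fin s → Euc n)
    (hp1 : p₁ = p₀ - Δt • ∑ i, b i • (jacT f (Q i) (P i) + gradient L (Q i)))
    (hP : ∀ i, P i = p₀ - Δt • ∑ j, a' i j • (jacT f (Q j) (P j) + gradient L (Q j)))
    (δq₀ δq₁ : Euc n) (δQ : Fin s → Euc n)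
    (hδq1 : δq₁ = δq₀ + Δt • ∑ i, b i • fderiv ℝ f (Q i) (δQ i))
    (hδQ : ∀ i, δQ i = δq₀ + Δt • ∑ j, a i j • fderiv ℝ f (Q j) (δQ j)) :
    ⟪p₁, δq₁⟫ = ⟪p₀, δq₀⟫ - Δt * ∑ i, b i * ⟪gradient L (Q i), δQ i⟫ := by
  have key := apply_eq_add_smul_sum_of_symplectic (innerₗ (Euc n)) Δt hsym hp1 hP hδq1 hδQ
  simp only [innerₗ_apply_apply, inner_add_left, inner_jacT_apply_left, smul_eq_mul] at key
  rw [key]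
  simp only [sub_add_cancel_left, mul_neg, sum_neg_distrib]
  ring

/-- the symplectic partitioned Runge–Kutta discretization of the augmented
adjoint ODE system satisfies the discrete identity
`⟨p₁, δq₁⟩ = ⟨p₀, δq₀⟩ − Δt Σᵢ bᵢ ⟨∇L(Qⁱ), δQⁱ⟩`. -/
theorem discrete_augmented_adjoint_quadratic_identity {n s : ℕ} (hs : 1 ≤ s)
    (f : Euc n → Euc n) (L : Euc n → ℝ)
    (hf : ContDiff ℝ 1 f) (hL : ContDiff ℝ 1 L)
    (Δt : ℝ) (hΔt : 0 < Δt)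
    (a a' : Fin s → Fin s → ℝ) (b : Fin s → ℝ)
    (hsym : ∀ i j, b i * a' i j + b j * a j i = b i * b j)
    (q₀ q₁ p₀ p₁ : Euc n) (Q P : Fin s → Euc n)
    (hq1 : q₁ = q₀ + Δt • ∑ i, b i • f (Q i))
    (hQ : ∀ i, Q i = q₀ + Δt • ∑ j, a i j • f (Q j))
    (hp1 : p₁ = p₀ - Δt • ∑ i, b i • (jacT f (Q i) (P i) + gradient L (Q i)))
    (hP : ∀ i, P i = p₀ - Δt • ∑ j, a' i j • (jacT f (Q j) (P j) + gradient L (Q j)))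
    (δq₀ δq₁ : Euc n) (δQ : Fin s → Euc n)
    (hδq1 : δq₁ = δq₀ + Δt • ∑ i, b i • fderiv ℝ f (Q i) (δQ i))
    (hδQ : ∀ i, δQ i = δq₀ + Δt • ∑ j, a i j • fderiv ℝ f (Q j) (δQ j)) :
    ⟪p₁, δq₁⟫ = ⟪p₀, δq₀⟫ - Δt * ∑ i, b i * ⟪gradient L (Q i), δQ i⟫ :=
  discrete_augmented_adjoint_quadratic_identity_general f L Δt a a' b hsym p₀ p₁ Q P hp1 hP δq₀ δq₁
    δQ hδq1 hδQ

end
end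
end
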